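/- arXiv:1805.09053 — 2 statements merged into one kernel-verified Lean document; each statement's English description precedes it below -/
import Mathlib

section
/- Let F be a field containing a primitive n-th root of unity ω, and let e_0,…,e_{n−1} be the rows of the associated n×n Fourier matrix. Suppose t is a natural number with t ≤ n−1 and 2t ≥ n−1. Then the code C spanned by the t+1 rows e_0, e_1, …, e_t is a dual-containing [n, t+1, n−t] MDS code: C^⊥ ⊆ C, C has dimension t+1, and every nonzero codeword of C has Hamming weight at least n−t. -/
/-!
A codeword `∑_{s ≤ t} a_s e_s` of `C` is the vector of values of the polynomial `∑ a_s X^s`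
of degree `≤ t` at the `n` distinct points `ω^j`, so a nonzero one has at most `t` zeros.
Since `⟨e_i, e_j⟩ = n` if `n ∣ i + j` and `0` otherwise, pairing `u = ∑_{j < n} c_j e_j ∈ C^⊥`
with `e_{n-j}` gives `n c_j = 0`; for `j > t` this row lies in `C` because `2t ≥ n - 1`,
so only `e_0, …, e_t` survive in `u`.
-/

open Finset

def fourierRow {F : Type*} [Field F] (n : ℕ) (ω : F) (i : ℕ) : Fin n → F :=
  fun j => ω ^ (i * (j : ℕ))

def fourierCode {F : Type*} [Field F] (n : ℕ) (ω : F) (t : ℕ) : Submodule F (Fin n → F) :=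
  Submodule.span F (Set.range fun s : Fin (t + 1) => fourierRow n ω s)

theorem card_filter_sum_mul_pow_eq_zero_lt {R ι : Type*} [CommRing R] [IsDomain R]
    [DecidableEq R] [Fintype ι] {m : ℕ} {z : ι → R} (hz : Function.Injective z)
    {a : Fin m → R} (ha : a ≠ 0) :
    #{x | ∑ s, a s * z x ^ (s : ℕ) = 0} < m := by
  by_contra! h
  -- `m` of the zeros would give an invertible Vandermonde system annihilating `a`
  obtain ⟨T, hTS, hT⟩ := exists_subset_card_eq h
  let g : Fin m ≃ T := (T.equivFin.trans (finCongr hT)).symm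
  refine ha (Matrix.eq_zero_of_forall_index_sum_mul_pow_eq_zero
    (f := fun k => z (g k)) (hz.comp (Subtype.val_injective.comp g.injective)) fun k => ?_)
  exact (mem_filter.mp (hTS (g k).2)).2

section Fourier

variable {F : Type*} [Field F] {n : ℕ} {ω : F}

theorem sum_smul_fourierRow_apply {m : ℕ} (a : Fin m → F) (x : Fin n) :
    (∑ s, a s • fourierRow n ω s) x = ∑ s, a s * (ω ^ (x : ℕ)) ^ (s : ℕ) := by
  simp [Finset.sum_apply, fourierRow, ← pow_mul, mul_comm]

theorem IsPrimitiveRoot.card_filter_sum_smul_fourierRow_eq_zero_lt [DecidableEq F]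
    (hω : IsPrimitiveRoot ω n) {m : ℕ} {a : Fin m → F} (ha : a ≠ 0) :
    #{x | (∑ s, a s • fourierRow n ω s) x = 0} < m := by
  simp_rw [sum_smul_fourierRow_apply]
  exact card_filter_sum_mul_pow_eq_zero_lt (fun x y h => Fin.ext (hω.pow_inj x.2 y.2 h)) ha

theorem IsPrimitiveRoot.linearIndependent_fourierRow (hω : IsPrimitiveRoot ω n) {m : ℕ}
    (hm : m ≤ n) : LinearIndependent F fun s : Fin m => fourierRow n ω s := by
  classical
  refine Fintype.linearIndependent_iff.mpr fun a h => congrFun (?_ : a = 0)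
  by_contra ha
  have := hω.card_filter_sum_smul_fourierRow_eq_zero_lt ha
  simp only [h, Pi.zero_apply, filter_true, card_univ, Fintype.card_fin] at this
  omega

theorem IsPrimitiveRoot.finrank_fourierCode (hω : IsPrimitiveRoot ω n) {t : ℕ} (ht : t < n) :
    Module.finrank F (fourierCode n ω t) = t + 1 := by
  rw [fourierCode, finrank_span_eq_card (hω.linearIndependent_fourierRow ht), Fintype.card_fin]

theorem IsPrimitiveRoot.le_hammingNorm_of_mem_fourierCode [DecidableEq F]
    (hω : IsPrimitiveRoot ω n) {t : ℕ} {v : Fin n → F} (hv : v ∈ fourierCode n ω t)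
    (hv0 : v ≠ 0) : n - t ≤ hammingNorm v := by
  obtain ⟨a, rfl⟩ := Submodule.mem_span_range_iff_exists_fun F |>.mp hv
  have ha : a ≠ 0 := by rintro rfl; simp at hv0
  have hzeros := hω.card_filter_sum_smul_fourierRow_eq_zero_lt ha
  have hsplit := card_filter_add_card_filter_not (s := univ)
    fun x => (∑ s, a s • fourierRow n ω s) x = 0
  rw [card_univ, Fintype.card_fin] at hsplit
  rw [hammingNorm]
  simp only [ne_eq]
  omega

theorem IsPrimitiveRoot.dotProduct_fourierRow (hω : IsPrimitiveRoot ω n) (i j : ℕ) :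
    fourierRow n ω i ⬝ᵥ fourierRow n ω j = if n ∣ i + j then (n : F) else 0 := by
  have hterm : ∀ x : Fin n, fourierRow n ω i x * fourierRow n ω j x = (ω ^ (i + j)) ^ (x : ℕ) :=
    fun x => by simp only [fourierRow, ← pow_add, ← pow_mul, add_mul]
  simp only [dotProduct, hterm, Fin.sum_univ_eq_sum_range (fun x => (ω ^ (i + j)) ^ x)]
  split_ifs with hdvd
  · simp [(hω.pow_eq_one_iff_dvd _).mpr hdvd]
  · have hne : ω ^ (i + j) ≠ 1 := fun h => hdvd ((hω.pow_eq_one_iff_dvd _).mp h)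
    rw [geom_sum_eq hne, ← pow_mul, mul_comm, pow_mul, hω.pow_eq_one, one_pow, sub_self,
      zero_div]

theorem IsPrimitiveRoot.sum_smul_fourierRow_dotProduct (hω : IsPrimitiveRoot ω n)
    (c : Fin n → F) {j : Fin n} (hj : 0 < (j : ℕ)) :
    (∑ i, c i • fourierRow n ω i) ⬝ᵥ fourierRow n ω (n - j) = n * c j := by
  simp only [sum_dotProduct, smul_dotProduct, hω.dotProduct_fourierRow, smul_eq_mul]
  rw [sum_eq_single j]
  · rw [if_pos ⟨1, by omega⟩, mul_comm]
  · intro i _ hij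
    have hndvd : ¬ n ∣ (i : ℕ) + (n - j) := fun hdvd =>
      hij (Fin.ext (by have := Nat.eq_of_dvd_of_lt_two_mul (by omega) hdvd (by omega); omega))
    rw [if_neg hndvd, mul_zero]
  · simp

theorem fourierRow_mem_fourierCode {t i : ℕ} (hi : i ≤ t) :
    fourierRow n ω i ∈ fourierCode n ω t :=
  Submodule.subset_span ⟨⟨i, by omega⟩, rfl⟩

theorem IsPrimitiveRoot.dual_subset_fourierCode (hω : IsPrimitiveRoot ω n) {t : ℕ}
    (h2t : n - 1 ≤ 2 * t) :
    {u | ∀ v ∈ fourierCode n ω t, u ⬝ᵥ v = 0} ⊆ (fourierCode n ω t : Set (Fin n → F)) := by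
  intro u hu
  have hspan := (hω.linearIndependent_fourierRow le_rfl).span_eq_top_of_card_eq_finrank'
    (by simp)
  obtain ⟨c, rfl⟩ :=
    Submodule.mem_span_range_iff_exists_fun F |>.mp (hspan ▸ Submodule.mem_top (x := u))
  refine Submodule.sum_mem _ fun j _ => ?_
  by_cases hj : (j : ℕ) ≤ t
  · exact Submodule.smul_mem _ _ (fourierRow_mem_fourierCode hj)
  · have hpair := hu _ (fourierRow_mem_fourierCode (ω := ω) (i := n - j) (by omega))
    have : NeZero n := ⟨by omega⟩
    rw [hω.sum_smul_fourierRow_dotProduct c (by omega)] at hpair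
    rw [(mul_eq_zero.mp hpair).resolve_left hω.neZero'.out, zero_smul]
    exact Submodule.zero_mem _

end Fourier

/-- If `2t ≥ n - 1`, the code generated by the rows `e_0, …, e_t` of the Fourier matrix
is a dual-containing `[n, t+1, n-t]` MDS code. -/
theorem fourier_dual_containing_mds
    {F : Type*} [Field F] [DecidableEq F] {n : ℕ} (hn : 0 < n)
    {ω : F} (hω : orderOf ω = n)
    (e : ℕ → Fin n → F)
    (he : ∀ (i : ℕ) (j : Fin n), e i j = ω ^ (i * j.val))
    (t : ℕ) (ht : t ≤ n - 1) (h2t : n - 1 ≤ 2 * t)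
    (C : Submodule F (Fin n → F))
    (hC : C = Submodule.span F (Set.range fun s : Fin (t + 1) => e s.val)) :
    {u : Fin n → F | ∀ v ∈ C, (∑ x, u x * v x) = 0} ⊆ (C : Set (Fin n → F)) ∧
      Module.finrank F C = t + 1 ∧
      ∀ v ∈ C, v ≠ 0 → n - t ≤ hammingNorm v := by
  have hprim : IsPrimitiveRoot ω n := hω ▸ IsPrimitiveRoot.orderOf ω
  obtain rfl : e = fourierRow n ω := funext fun i => funext (he i)
  obtain rfl : C = fourierCode n ω t := hC
  exact ⟨hprim.dual_subset_fourierCode h2t, hprim.finrank_fourierCode (by omega),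
    fun _ hv hv0 => hprim.le_hammingNorm_of_mem_fourierCode hv hv0⟩
end

section
/- Let F be a field containing a primitive n-th root of unity ω, and let e_0,…,e_{n−1} be the rows of the associated n×n Fourier matrix. Let S ⊆ {0,1,…,n−1} and let C be the code spanned by the rows {e_i : i ∈ S}. If C contains its Euclidean dual (C^⊥ ⊆ C), then 2·|S| > n; that is, strictly more than half of the rows must be used to generate a dual-containing code. -/
/-!
The rows `e_i`, `e_k` of the Fourier matrix are orthogonal unless `i + k ≡ 0 (mod n)`, by the
geometric sum of the root of unity `ω ^ (i + k)`, and they are linearly independent (Vandermonde).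
So for `j ∉ S` the row `e_{-j}` is orthogonal to every generator, hence lies in `C^⊥ ⊆ C`, which
forces `-j ∈ S`. Thus `0 ∈ S` and negation injects the complement of `S` into `S \ {0}`.
-/

open Matrix

def fourierMatrix {F : Type*} [Field F] (ω : F) (n : ℕ) : Matrix (Fin n) (Fin n) F :=
  vandermonde fun i : Fin n => ω ^ (i : ℕ)

theorem dotProduct_eq_zero_of_mem_span {R ι : Type*} [CommSemiring R] [Fintype ι] {u : ι → R}
    {s : Set (ι → R)} (hs : ∀ v ∈ s, u ⬝ᵥ v = 0) {v : ι → R} (hv : v ∈ Submodule.span R s) :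
    u ⬝ᵥ v = 0 := by
  have hle : Submodule.span R s ≤ LinearMap.ker (dotProductBilin R R u) :=
    Submodule.span_le.mpr fun w hw => by simpa using hs w hw
  simpa using hle hv

section Fourier

variable {F : Type*} [Field F] {ω : F} {n : ℕ}

theorem fourierMatrix_apply (i j : Fin n) : fourierMatrix ω n i j = ω ^ ((i : ℕ) * j) := by
  rw [fourierMatrix, vandermonde_apply, pow_mul]

theorem IsPrimitiveRoot.linearIndependent_fourierMatrix (hω : IsPrimitiveRoot ω n) :
    LinearIndependent F (fourierMatrix ω n) :=
  linearIndependent_rows_of_det_ne_zero <| det_vandermonde_ne_zero_iff.mpr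
    fun a b hab => Fin.ext (hω.pow_inj a.isLt b.isLt hab)

theorem IsPrimitiveRoot.fourierMatrix_dotProduct_eq_zero [NeZero n] (hω : IsPrimitiveRoot ω n)
    {i k : Fin n} (hik : i + k ≠ 0) : fourierMatrix ω n i ⬝ᵥ fourierMatrix ω n k = 0 := by
  set z := ω ^ ((i : ℕ) + k)
  have hz : z ≠ 1 := by
    rwa [Ne, hω.pow_eq_one_iff_dvd, Nat.dvd_iff_mod_eq_zero, ← Fin.val_add, ← Fin.val_zero n,
      ← Fin.ext_iff]
  have hzn : z ^ n = 1 := by rw [← pow_mul, mul_comm, pow_mul, hω.pow_eq_one, one_pow]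
  calc fourierMatrix ω n i ⬝ᵥ fourierMatrix ω n k = ∑ x : Fin n, z ^ (x : ℕ) := by
        refine Finset.sum_congr rfl fun x _ => ?_
        rw [fourierMatrix_apply, fourierMatrix_apply, ← pow_add, ← add_mul, pow_mul]
    _ = 0 := by
      rw [Fin.sum_univ_eq_sum_range (z ^ ·), geom_sum_eq hz, hzn, sub_self, zero_div]

theorem IsPrimitiveRoot.neg_mem_of_dual_subset_span_fourierMatrix [NeZero n] (hω : IsPrimitiveRoot ω n) {S : Finset (Fin n)}
    (hdual : {u | ∀ v ∈ Submodule.span F (fourierMatrix ω n '' S), u ⬝ᵥ v = 0} ⊆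
      (Submodule.span F (fourierMatrix ω n '' S) : Set (Fin n → F)))
    {j : Fin n} (hj : j ∉ S) : -j ∈ S := by
  have hmem : fourierMatrix ω n (-j) ∈ Submodule.span F (fourierMatrix ω n '' S) := by
    refine hdual fun v hv => dotProduct_eq_zero_of_mem_span ?_ hv
    rintro _ ⟨k, hk, rfl⟩
    refine hω.fourierMatrix_dotProduct_eq_zero fun h => hj ?_
    rwa [neg_add_eq_zero.mp h]
  by_contra h
  exact hω.linearIndependent_fourierMatrix.notMem_span_image h hmem

end Fourier

theorem Finset.card_lt_two_mul_card_of_neg_mem {G : Type*} [AddGroup G] [Fintype G]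
    [DecidableEq G] {S : Finset G} (hS : ∀ j ∉ S, -j ∈ S) : Fintype.card G < 2 * S.card := by
  have h0 : (0 : G) ∈ S := by
    by_contra h0
    exact h0 (by simpa using hS 0 h0)
  have hcard : Sᶜ.card ≤ (S.erase 0).card := by
    refine Finset.card_le_card_of_injOn (-·) (fun j hj => ?_) neg_injective.injOn
    rw [Finset.mem_coe, Finset.mem_compl] at hj
    exact Finset.mem_erase.mpr ⟨fun h => hj (neg_eq_zero.mp h ▸ h0), hS j hj⟩
  rw [Finset.card_compl, Finset.card_erase_of_mem h0] at hcard
  have hS1 : 1 ≤ S.card := Finset.card_pos.mpr ⟨0, h0⟩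
  omega

/-- If the code generated by the rows `{e_i : i ∈ S}` of the Fourier matrix contains
its Euclidean dual, then strictly more than half of the rows are used: `2·|S| > n`. -/
theorem fourier_dual_containing_needs_more_than_half
    {F : Type*} [Field F] {n : ℕ} (hn : 0 < n)
    {ω : F} (hω : orderOf ω = n)
    (e : Fin n → Fin n → F)
    (he : ∀ i j : Fin n, e i j = ω ^ (i.val * j.val))
    (S : Finset (Fin n))
    (C : Submodule F (Fin n → F))
    (hC : C = Submodule.span F (e '' (S : Set (Fin n))))
    (hdual : {u : Fin n → F | ∀ v ∈ C, (∑ x, u x * v x) = 0} ⊆ (C : Set (Fin n → F))) :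
    n < 2 * S.card := by
  have : NeZero n := ⟨hn.ne'⟩
  have hprim : IsPrimitiveRoot ω n := hω ▸ IsPrimitiveRoot.orderOf ω
  obtain rfl : e = fourierMatrix ω n :=
    funext₂ fun i j => (he i j).trans (fourierMatrix_apply i j).symm
  subst hC
  simpa using Finset.card_lt_two_mul_card_of_neg_mem fun j hj =>
    hprim.neg_mem_of_dual_subset_span_fourierMatrix hdual hj
end
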